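/- Let V be a smooth family of elements of a finite-dimensional inner product space on [0,τ] with V(0) = V(τ) = 0, and let λ(t) = τ + η − t for η > 0. Then for each m ∈ ℕ, ∫₀^τ λ^{-2m}|V'(t)|² dt ≥ m(m+1) ∫₀^τ λ^{-2(m+1)}|V(t)|² dt. -/

import Mathlib

open scoped RealInnerProductSpace
open intervalIntegral MeasureTheory


/-- the ODE Carleman estimate with kernel `λ(t) = τ + η - t`:
`∫₀^τ λ^{-2m} |V'|² dt ≥ m(m+1) ∫₀^τ λ^{-2(m+1)} |V|² dt`
for smooth `V` vanishing at `t = 0` and `t = τ`. -/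
theorem ode_carleman {E : Type*} [NormedAddCommGroup E] [InnerProductSpace ℝ E]
    [FiniteDimensional ℝ E]
    (τ η : ℝ) (hτ : 0 < τ) (hη : 0 < η) (V : ℝ → E) (hV : ContDiff ℝ (⊤ : ℕ∞) V)
    (hV0 : V 0 = 0) (hVτ : V τ = 0) (m : ℕ) :
    (m : ℝ) * (m + 1) * ∫ t in (0:ℝ)..τ, ‖V t‖ ^ 2 / (τ + η - t) ^ (2 * (m + 1))
      ≤ ∫ t in (0:ℝ)..τ, ‖deriv V t‖ ^ 2 / (τ + η - t) ^ (2 * m) := by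
  have h0τ : (0:ℝ) ≤ τ := hτ.le
  have huIcc : Set.uIcc (0:ℝ) τ = Set.Icc 0 τ := Set.uIcc_of_le h0τ
  have hpos : ∀ t ∈ Set.uIcc (0:ℝ) τ, (0:ℝ) < τ + η - t := by
    intro t ht; rw [huIcc] at ht; have := ht.2; linarith
  have hVd : Differentiable ℝ V := hV.differentiable (by simp)
  have hV'c : Continuous (deriv V) := hV.continuous_deriv (by simp)
  set W : ℝ → E := fun t =>
    (((τ + η - t) ^ m)⁻¹) • deriv V t + ((m : ℝ) / (τ + η - t) ^ (m + 1)) • V t with hW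
  set g : ℝ → ℝ := fun t =>
    (m : ℝ) * (2 * m + 1) * ‖V t‖ ^ 2 / (τ + η - t) ^ (2 * m + 2)
      + 2 * (m : ℝ) * ⟪V t, deriv V t⟫ / (τ + η - t) ^ (2 * m + 1) with hg
  set G : ℝ → ℝ := fun t => (m : ℝ) * ‖V t‖ ^ 2 / (τ + η - t) ^ (2 * m + 1) with hG
  -- derivative of G
  have hGd : ∀ t ∈ Set.uIcc (0:ℝ) τ, HasDerivAt G (g t) t := by
    intro t ht
    have hne : τ + η - t ≠ 0 := (hpos t ht).ne'
    have hd1 : HasDerivAt (fun s : ℝ => τ + η - s) (-1) t := by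
      simpa using (hasDerivAt_id t).const_sub (τ + η)
    have hd2 := hd1.pow (2 * m + 1)
    have hd3 := hd2.inv (pow_ne_zero _ hne)
    have hnorm : HasDerivAt (fun s => ‖V s‖ ^ 2) (2 * ⟪V t, deriv V t⟫) t := by
      have h := ((hVd t).hasDerivAt.inner ℝ (hVd t).hasDerivAt)
      simp only [real_inner_self_eq_norm_sq] at h
      rw [real_inner_comm (V t) (deriv V t)] at h
      rw [two_mul]; exact h
    have hd4 := (hnorm.const_mul (m : ℝ)).mul hd3
    have hd5 : HasDerivAt G ((m : ℝ) * (2 * ⟪V t, deriv V t⟫) *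
        ((τ + η - t) ^ (2 * m + 1))⁻¹ +
        (m : ℝ) * ‖V t‖ ^ 2 *
          (-(↑(2 * m + 1) * (τ + η - t) ^ (2 * m + 1 - 1) * -1 /
            ((τ + η - t) ^ (2 * m + 1)) ^ 2))) t := by
      simpa [hG, div_eq_mul_inv, mul_assoc, Pi.mul_def, Pi.inv_def, Pi.pow_def] using hd4
    convert hd5 using 1
    simp only [hg]
    set u := τ + η - t with hu
    have h1 : 2 * m + 1 - 1 = 2 * m := rfl
    rw [h1]
    push_cast
    field_simp
    ring
  -- continuity facts
  have hcl : Continuous fun t : ℝ => τ + η - t := by continuity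
  have hgc : ContinuousOn g (Set.uIcc 0 τ) := by
    apply ContinuousOn.add
    · exact (((continuous_const.mul ((hV.continuous.norm).pow 2)).continuousOn).div
        ((hcl.pow _).continuousOn) (fun t ht => pow_ne_zero _ (hpos t ht).ne'))
    · exact (((continuous_const.mul (hV.continuous.inner hV'c)).continuousOn).div
        ((hcl.pow _).continuousOn) (fun t ht => pow_ne_zero _ (hpos t ht).ne'))
  have hWc : ContinuousOn (fun t => ‖W t‖ ^ 2) (Set.uIcc 0 τ) := by
    apply ContinuousOn.pow
    apply ContinuousOn.norm
    apply ContinuousOn.add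
    · exact (((hcl.pow m).continuousOn.inv₀
        (fun t ht => pow_ne_zero _ (hpos t ht).ne')).smul hV'c.continuousOn)
    · exact ((continuousOn_const.div ((hcl.pow (m+1)).continuousOn)
        (fun t ht => pow_ne_zero _ (hpos t ht).ne')).smul hV.continuous.continuousOn)
  have hf2c : ContinuousOn (fun t => ‖V t‖ ^ 2 / (τ + η - t) ^ (2 * (m+1))) (Set.uIcc 0 τ) :=
    ((hV.continuous.norm.pow 2).continuousOn).div ((hcl.pow _).continuousOn)
      (fun t ht => pow_ne_zero _ (hpos t ht).ne')
  have hgint : IntervalIntegrable g volume 0 τ := hgc.intervalIntegrable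
  have hWint : IntervalIntegrable (fun t => ‖W t‖ ^ 2) volume 0 τ := hWc.intervalIntegrable
  have hf2int : IntervalIntegrable
      (fun t => (m:ℝ)*(m+1) * (‖V t‖ ^ 2 / (τ + η - t) ^ (2 * (m+1)))) volume 0 τ :=
    (hf2c.intervalIntegrable).const_mul _
  -- FTC: integral of g vanishes
  have hg0 : ∫ t in (0:ℝ)..τ, g t = 0 := by
    rw [integral_eq_sub_of_hasDerivAt hGd hgint]
    simp [hG, hV0, hVτ]
  -- pointwise identity
  have hkey : Set.EqOn (fun t => ‖deriv V t‖ ^ 2 / (τ + η - t) ^ (2 * m))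
      (fun t => (‖W t‖ ^ 2 - g t) + (m:ℝ)*(m+1) * (‖V t‖ ^ 2 / (τ + η - t) ^ (2 * (m+1))))
      (Set.uIcc 0 τ) := by
    intro t ht
    have hpos' := hpos t ht
    have hne : τ + η - t ≠ 0 := hpos'.ne'
    simp only [hW, hg]
    rw [norm_add_sq_real, real_inner_smul_left, real_inner_smul_right, norm_smul, norm_smul,
      mul_pow, mul_pow, Real.norm_eq_abs, Real.norm_eq_abs, sq_abs, sq_abs,
      real_inner_comm (deriv V t) (V t)]
    set u := τ + η - t with hu
    field_simp
    ring
  -- assemble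
  have hsplit : ∫ t in (0:ℝ)..τ, ‖deriv V t‖ ^ 2 / (τ + η - t) ^ (2 * m)
      = (∫ t in (0:ℝ)..τ, (‖W t‖ ^ 2 - g t))
        + ∫ t in (0:ℝ)..τ, (m:ℝ)*(m+1) * (‖V t‖ ^ 2 / (τ + η - t) ^ (2 * (m+1))) := by
    rw [integral_congr hkey]
    exact integral_add (hWint.sub hgint) hf2int
  rw [hsplit, integral_sub hWint hgint, hg0, sub_zero, intervalIntegral.integral_const_mul]
  have hWnn : 0 ≤ ∫ t in (0:ℝ)..τ, ‖W t‖ ^ 2 :=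
    integral_nonneg h0τ (fun t _ => by positivity)
  linarith
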